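/- Let V be the upper probability on a measurable space (Ω,𝓕) generated by a nonempty set 𝒫 of finitely additive probabilities, assume V is continuous, and let θ : Ω → Ω be a measurable transformation preserving V. Then θ is ergodic with respect to V if and only if every measurable ξ : Ω → ℝ satisfying ξ(θ·) = ξ(·) quasi-surely (i.e. V({ω : ξ(θω) ≠ ξ(ω)}) = 0) is constant quasi-surely, i.e. there exists c ∈ ℝ with V({ω : ξ(ω) ≠ c}) = 0. -/

import Mathlib

open MeasureTheory Filter Topology Set

def IsFinAddProb {Ω : Type*} [MeasurableSpace Ω] (P : Set Ω → ℝ) : Prop :=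
  P ∅ = 0 ∧ P Set.univ = 1 ∧
    (∀ A : Set Ω, MeasurableSet A → 0 ≤ P A ∧ P A ≤ 1) ∧
    (∀ A B : Set Ω, MeasurableSet A → MeasurableSet B → Disjoint A B →
      P (A ∪ B) = P A + P B)

def IsCapacity {Ω : Type*} [MeasurableSpace Ω] (μ : Set Ω → ℝ) : Prop :=
  μ ∅ = 0 ∧ μ Set.univ = 1 ∧
    ∀ A B : Set Ω, MeasurableSet A → MeasurableSet B → A ⊆ B → μ A ≤ μ B

def ContBelow {Ω : Type*} [MeasurableSpace Ω] (μ : Set Ω → ℝ) : Prop :=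
  ∀ A : ℕ → Set Ω, (∀ n, MeasurableSet (A n)) → Monotone A →
    Filter.Tendsto (fun n => μ (A n)) Filter.atTop (nhds (μ (⋃ n, A n)))

def ContAbove {Ω : Type*} [MeasurableSpace Ω] (μ : Set Ω → ℝ) : Prop :=
  ∀ A : ℕ → Set Ω, (∀ n, MeasurableSet (A n)) → Antitone A →
    Filter.Tendsto (fun n => μ (A n)) Filter.atTop (nhds (μ (⋂ n, A n)))

def ContAtEmpty {Ω : Type*} [MeasurableSpace Ω] (μ : Set Ω → ℝ) : Prop :=
  ∀ A : ℕ → Set Ω, (∀ n, MeasurableSet (A n)) → Antitone A → (⋂ n, A n) = ∅ →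
    Filter.Tendsto (fun n => μ (A n)) Filter.atTop (nhds 0)

def ContAtUniv {Ω : Type*} [MeasurableSpace Ω] (μ : Set Ω → ℝ) : Prop :=
  ∀ A : ℕ → Set Ω, (∀ n, MeasurableSet (A n)) → Monotone A → (⋃ n, A n) = Set.univ →
    Filter.Tendsto (fun n => μ (A n)) Filter.atTop (nhds 1)

def conjCap {Ω : Type*} (μ : Set Ω → ℝ) (A : Set Ω) : ℝ := 1 - μ Aᶜ

noncomputable def choquet {Ω : Type*} (μ : Set Ω → ℝ) (ξ : Ω → ℝ) : ℝ :=
  (∫ t in Set.Ioi (0:ℝ), μ {ω | ξ ω ≥ t}) +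
    (∫ t in Set.Iio (0:ℝ), (μ {ω | ξ ω ≥ t} - 1))

noncomputable def choquetE {Ω : Type*} (μ : Set Ω → ℝ) (ξ : Ω → EReal) : ℝ :=
  (∫ t in Set.Ioi (0:ℝ), μ {ω | (t : EReal) ≤ ξ ω}) +
    (∫ t in Set.Iio (0:ℝ), (μ {ω | (t : EReal) ≤ ξ ω} - 1))

def UpperProbOf {Ω : Type*} [MeasurableSpace Ω] (𝒮 : Set (Set Ω → ℝ)) (V : Set Ω → ℝ) : Prop :=
  ∀ A : Set Ω, MeasurableSet A → V A = sSup ((fun P => P A) '' 𝒮)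

def LowerProbOf {Ω : Type*} [MeasurableSpace Ω] (𝒮 : Set (Set Ω → ℝ)) (v : Set Ω → ℝ) : Prop :=
  ∀ A : Set Ω, MeasurableSet A → v A = sInf ((fun P => P A) '' 𝒮)

def ErgodicCap {Ω : Type*} [MeasurableSpace Ω] (μ : Set Ω → ℝ) (θ : Ω → Ω) : Prop :=
  ∀ B : Set Ω, MeasurableSet B → θ ⁻¹' B = B →
    (μ B = 0 ∨ μ B = 1) ∧ (μ B = 0 ∨ μ Bᶜ = 0)

def PreservesCap {Ω : Type*} [MeasurableSpace Ω] (μ : Set Ω → ℝ) (θ : Ω → Ω) : Prop :=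
  ∀ A : Set Ω, MeasurableSet A → μ (θ ⁻¹' A) = μ A

def IndepSigmaWrt {Ω : Type*} (μ : Set Ω → ℝ) (m₁ m₂ : MeasurableSpace Ω) : Prop :=
  ∀ A B : Set Ω, MeasurableSet[m₁] A → MeasurableSet[m₂] B → μ (A ∩ B) = μ A * μ B

/-! The null sets of a subadditive capacity that is continuous from below are closed under
countable unions, so "quasi-surely" is a filter with the countable intersection property, and θ
maps it into itself because it preserves `V`. For an upper probability, `V Bᶜ = 0` forces
`V B = 1`, so ergodicity says exactly that every invariant set is trivial along this filter.
A quasi-surely invariant set agrees quasi-surely with the invariant set `limsup θ⁻ⁿ s`, hence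
every level set `ξ⁻¹ U` of a quasi-surely invariant `ξ` is trivial, and since the Borel
σ-algebra of `ℝ` is countably separated, such a `ξ` is quasi-surely constant. Conversely,
the indicator of an invariant set is invariant, and it is quasi-surely constant exactly when
the set is trivial. -/

section FinAddProb

variable {Ω : Type*} [MeasurableSpace Ω] {P : Set Ω → ℝ} {A B : Set Ω}

theorem IsFinAddProb.nonneg (hP : IsFinAddProb P) (hA : MeasurableSet A) : 0 ≤ P A :=
  (hP.2.2.1 A hA).1

theorem IsFinAddProb.le_one (hP : IsFinAddProb P) (hA : MeasurableSet A) : P A ≤ 1 :=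
  (hP.2.2.1 A hA).2

theorem IsFinAddProb.union_eq_add_diff (hP : IsFinAddProb P) (hA : MeasurableSet A)
    (hB : MeasurableSet B) : P (A ∪ B) = P A + P (B \ A) := by
  rw [← union_sdiff_self]
  exact hP.2.2.2 A (B \ A) hA (hB.diff hA) disjoint_sdiff_right

theorem IsFinAddProb.mono (hP : IsFinAddProb P) (hA : MeasurableSet A) (hB : MeasurableSet B)
    (hAB : A ⊆ B) : P A ≤ P B := by
  have h := hP.union_eq_add_diff hA hB
  rw [union_eq_right.2 hAB] at h
  linarith [hP.nonneg (hB.diff hA)]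

theorem IsFinAddProb.union_le (hP : IsFinAddProb P) (hA : MeasurableSet A)
    (hB : MeasurableSet B) : P (A ∪ B) ≤ P A + P B := by
  rw [hP.union_eq_add_diff hA hB]
  linarith [hP.mono (hB.diff hA) hB sdiff_subset]

theorem IsFinAddProb.compl (hP : IsFinAddProb P) (hA : MeasurableSet A) : P Aᶜ = 1 - P A := by
  have h := hP.2.2.2 A Aᶜ hA hA.compl disjoint_compl_right
  rw [union_compl_self, hP.2.1] at h
  linarith

end FinAddProb

def IsSubadditive {Ω : Type*} [MeasurableSpace Ω] (μ : Set Ω → ℝ) : Prop :=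
  ∀ A B : Set Ω, MeasurableSet A → MeasurableSet B → μ (A ∪ B) ≤ μ A + μ B

namespace UpperProbOf

variable {Ω : Type*} [MeasurableSpace Ω] {𝒮 : Set (Set Ω → ℝ)} {V : Set Ω → ℝ} {A : Set Ω}

theorem le_of_mem (hV : UpperProbOf 𝒮 V) (hP : ∀ P ∈ 𝒮, IsFinAddProb P) (hA : MeasurableSet A)
    {P : Set Ω → ℝ} (hPS : P ∈ 𝒮) : P A ≤ V A := by
  rw [hV A hA]
  exact le_csSup ⟨1, forall_mem_image.2 fun Q hQ => (hP Q hQ).le_one hA⟩ (mem_image_of_mem _ hPS)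

theorem le_of_forall_le (hV : UpperProbOf 𝒮 V) (h𝒮 : 𝒮.Nonempty) (hA : MeasurableSet A)
    {c : ℝ} (hc : ∀ P ∈ 𝒮, P A ≤ c) : V A ≤ c := by
  rw [hV A hA]
  exact csSup_le (h𝒮.image _) (forall_mem_image.2 hc)

theorem isCapacity (hV : UpperProbOf 𝒮 V) (h𝒮 : 𝒮.Nonempty) (hP : ∀ P ∈ 𝒮, IsFinAddProb P) :
    IsCapacity V := by
  obtain ⟨P, hPS⟩ := h𝒮
  refine ⟨le_antisymm ?_ ?_, le_antisymm ?_ ?_, fun _ _ hA hB hAB => ?_⟩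
  · exact hV.le_of_forall_le ⟨P, hPS⟩ .empty fun Q hQ => (hP Q hQ).1.le
  · exact (hP P hPS).1 ▸ hV.le_of_mem hP .empty hPS
  · exact hV.le_of_forall_le ⟨P, hPS⟩ .univ fun Q hQ => (hP Q hQ).2.1.le
  · exact (hP P hPS).2.1 ▸ hV.le_of_mem hP .univ hPS
  · exact hV.le_of_forall_le ⟨P, hPS⟩ hA fun Q hQ =>
      ((hP Q hQ).mono hA hB hAB).trans (hV.le_of_mem hP hB hQ)

theorem isSubadditive (hV : UpperProbOf 𝒮 V) (h𝒮 : 𝒮.Nonempty)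
    (hP : ∀ P ∈ 𝒮, IsFinAddProb P) : IsSubadditive V := fun _ _ hA hB =>
  hV.le_of_forall_le h𝒮 (hA.union hB) fun Q hQ =>
    ((hP Q hQ).union_le hA hB).trans (add_le_add (hV.le_of_mem hP hA hQ) (hV.le_of_mem hP hB hQ))

theorem eq_one_of_compl_eq_zero (hV : UpperProbOf 𝒮 V) (h𝒮 : 𝒮.Nonempty)
    (hP : ∀ P ∈ 𝒮, IsFinAddProb P) (hA : MeasurableSet A) (h0 : V Aᶜ = 0) : V A = 1 := by
  obtain ⟨P, hPS⟩ := h𝒮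
  have hPc : P Aᶜ ≤ 0 := h0 ▸ hV.le_of_mem hP hA.compl hPS
  have hP1 : P A = 1 := by
    linarith [(hP P hPS).compl hA, (hP P hPS).nonneg hA.compl]
  exact le_antisymm (hV.le_of_forall_le ⟨P, hPS⟩ hA fun Q hQ => (hP Q hQ).le_one hA)
    (hP1 ▸ hV.le_of_mem hP hA hPS)

end UpperProbOf

section Capacity

variable {Ω : Type*} [MeasurableSpace Ω] {μ : Set Ω → ℝ} {A B : Set Ω}

theorem IsCapacity.mono (hμ : IsCapacity μ) (hA : MeasurableSet A) (hB : MeasurableSet B)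
    (hAB : A ⊆ B) : μ A ≤ μ B :=
  hμ.2.2 A B hA hB hAB

theorem IsCapacity.nonneg (hμ : IsCapacity μ) (hA : MeasurableSet A) : 0 ≤ μ A :=
  hμ.1 ▸ hμ.mono .empty hA (empty_subset A)

theorem IsCapacity.eq_zero_of_subset (hμ : IsCapacity μ) (hA : MeasurableSet A)
    (hB : MeasurableSet B) (hAB : A ⊆ B) (hB0 : μ B = 0) : μ A = 0 :=
  le_antisymm (hB0 ▸ hμ.mono hA hB hAB) (hμ.nonneg hA)

theorem ContBelow.iUnion_eq_zero (hcont : ContBelow μ) (hμ : IsCapacity μ)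
    (hsub : IsSubadditive μ) {A : ℕ → Set Ω} (hA : ∀ n, MeasurableSet (A n))
    (h0 : ∀ n, μ (A n) = 0) : μ (⋃ n, A n) = 0 := by
  have hmeas : ∀ n, MeasurableSet (accumulate A n) := fun n =>
    .biUnion (to_countable _) fun k _ => hA k
  have hacc : ∀ n, μ (accumulate A n) = 0 := by
    intro n
    induction n with
    | zero => rw [accumulate_zero_nat, h0]
    | succ n ih =>
      rw [accumulate_succ]
      refine le_antisymm ?_ (hμ.nonneg ((hmeas n).union (hA _)))
      calc μ (accumulate A n ∪ A (n + 1)) ≤ μ (accumulate A n) + μ (A (n + 1)) :=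
            hsub _ _ (hmeas n) (hA _)
        _ = 0 := by rw [ih, h0, add_zero]
  rw [← iUnion_accumulate]
  exact tendsto_nhds_unique (hcont _ hmeas monotone_accumulate)
    (by simp only [hacc, tendsto_const_nhds])

end Capacity

section QuasiSure

variable {Ω : Type*} [MeasurableSpace Ω] {μ : Set Ω → ℝ} {s N : Set Ω}

def quasiSure (μ : Set Ω → ℝ) : Filter Ω :=
  countableGenerate {s | MeasurableSet s ∧ μ sᶜ = 0}

instance (μ : Set Ω → ℝ) : CountableInterFilter (quasiSure μ) :=
  inferInstanceAs (CountableInterFilter (countableGenerate _))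

theorem mem_quasiSure (hs : MeasurableSet s) (h0 : μ sᶜ = 0) : s ∈ quasiSure μ :=
  CountableGenerateSets.basic ⟨hs, h0⟩

theorem compl_mem_quasiSure_iff (hμ : IsCapacity μ) (hsub : IsSubadditive μ)
    (hcont : ContBelow μ) (hN : MeasurableSet N) : Nᶜ ∈ quasiSure μ ↔ μ N = 0 := by
  refine ⟨fun h => ?_, fun h0 => mem_quasiSure hN.compl (by rwa [compl_compl])⟩
  obtain ⟨S, hSg, hSc, hSN⟩ := mem_countableGenerate_iff.1 h
  rcases S.eq_empty_or_nonempty with rfl | hSne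
  · rw [sInter_empty, univ_subset_iff, compl_univ_iff] at hSN
    exact hSN ▸ hμ.1
  obtain ⟨f, rfl⟩ := hSc.exists_eq_range hSne
  have hf : ∀ n, MeasurableSet (f n) ∧ μ (f n)ᶜ = 0 := fun n => hSg (mem_range_self n)
  have hNsub : N ⊆ ⋃ n, (f n)ᶜ := by
    rwa [sInter_range, subset_compl_comm, compl_iInter] at hSN
  exact hμ.eq_zero_of_subset hN (.iUnion fun n => (hf n).1.compl) hNsub
    (hcont.iUnion_eq_zero hμ hsub (fun n => (hf n).1.compl) fun n => (hf n).2)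

theorem eventually_quasiSure_iff (hμ : IsCapacity μ) (hsub : IsSubadditive μ)
    (hcont : ContBelow μ) {p : Ω → Prop} (hp : MeasurableSet {x | ¬p x}) :
    (∀ᶠ x in quasiSure μ, p x) ↔ μ {x | ¬p x} = 0 := by
  rw [← compl_mem_quasiSure_iff hμ hsub hcont hp, compl_ofPred]
  simp only [not_not]
  rfl

theorem PreservesCap.tendsto_quasiSure {θ : Ω → Ω} (hpres : PreservesCap μ θ)
    (hθ : Measurable θ) : Tendsto θ (quasiSure μ) (quasiSure μ) :=
  le_countableGenerate_iff_of_countableInterFilter.2 fun _ ⟨hs, h0⟩ =>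
    mem_quasiSure (hθ hs) (by rw [← preimage_compl, hpres _ hs.compl, h0])

theorem UpperProbOf.ergodicCap_iff {𝒮 : Set (Set Ω → ℝ)} {V : Set Ω → ℝ}
    (hV : UpperProbOf 𝒮 V) (h𝒮 : 𝒮.Nonempty) (hP : ∀ P ∈ 𝒮, IsFinAddProb P)
    (hcont : ContBelow V) {θ : Ω → Ω} :
    ErgodicCap V θ ↔
      ∀ B, MeasurableSet B → θ ⁻¹' B = B → B ∈ quasiSure V ∨ Bᶜ ∈ quasiSure V := by
  have hnull {B : Set Ω} (hB : MeasurableSet B) : Bᶜ ∈ quasiSure V ↔ V B = 0 :=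
    compl_mem_quasiSure_iff (hV.isCapacity h𝒮 hP) (hV.isSubadditive h𝒮 hP) hcont hB
  have hfull {B : Set Ω} (hB : MeasurableSet B) : B ∈ quasiSure V ↔ V Bᶜ = 0 := by
    rw [← hnull hB.compl, compl_compl]
  refine forall₂_congr fun B hB => imp_congr_right fun _ => ?_
  rw [hfull hB, hnull hB]
  constructor
  · exact fun h => h.2.symm
  · rintro (h | h)
    · exact ⟨Or.inr (hV.eq_one_of_compl_eq_zero h𝒮 hP hB h), Or.inr h⟩
    · exact ⟨Or.inl h, Or.inl h⟩

end QuasiSure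

theorem mem_or_compl_mem_of_indicator_eventuallyEq_const {α M : Type*} {l : Filter α}
    [Zero M] [One M] [NeZero (1 : M)] {B : Set α} {c : M} (h : ∀ᶠ x in l, B.indicator 1 x = c) :
    B ∈ l ∨ Bᶜ ∈ l := by
  rcases eq_or_ne c 1 with rfl | hc1
  · refine Or.inl (h.mono fun x hx => by_contra fun hxB => ?_)
    rw [indicator_of_notMem hxB] at hx
    exact zero_ne_one hx
  · refine Or.inr (h.mono fun x hx hxB => hc1 ?_)
    rw [← hx, indicator_of_mem hxB, Pi.one_apply]

section InvariantSets

variable {α β : Type*} [MeasurableSpace α] {l : Filter α} [CountableInterFilter l] {θ : α → α}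

theorem exists_preimage_eq_of_preimage_eventuallyEq (hθ : Measurable θ)
    (hl : Tendsto θ l l) {s : Set α} (hs : MeasurableSet s) (h : θ ⁻¹' s =ᶠ[l] s) :
    ∃ t, MeasurableSet t ∧ θ ⁻¹' t = t ∧ t =ᶠ[l] s := by
  have hiter : ∀ n, θ^[n] ⁻¹' s =ᶠ[l] s := by
    intro n
    induction n with
    | zero => rfl
    | succ n ih =>
      rw [Function.iterate_succ, preimage_comp]
      exact EventuallyEq.trans (hl.eventually ih) h
  refine ⟨limsup (fun n => θ^[n] ⁻¹' s) atTop,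
    .measurableSet_limsup fun n => hθ.iterate n hs, ?_, ?_⟩
  · simp only [preimage_iterate_eq]
    exact CompleteLatticeHom.apply_limsup_iterate (CompleteLatticeHom.setPreimage θ) s
  · simp only [eventuallyEq_set, ← eventually_countable_forall] at hiter
    refine eventuallyEq_set.2 (hiter.mono fun x hx => ?_)
    simp [mem_limsup_iff_frequently_mem, hx]

theorem exists_eventuallyEq_const_of_comp_eventuallyEq [MeasurableSpace β]
    [MeasurableSpace.CountablySeparated β] [Nonempty β] (hθ : Measurable θ) (hl : Tendsto θ l l)
    (herg : ∀ B, MeasurableSet B → θ ⁻¹' B = B → B ∈ l ∨ Bᶜ ∈ l) {ξ : α → β}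
    (hξ : Measurable ξ) (h : ξ ∘ θ =ᶠ[l] ξ) : ∃ c, ξ =ᶠ[l] Function.const α c := by
  refine exists_eventuallyEq_const_of_forall_separating MeasurableSet fun U hU => ?_
  obtain ⟨B, hBm, hBinv, hBU⟩ :=
    exists_preimage_eq_of_preimage_eventuallyEq hθ hl (hξ hU) (h.preimage U)
  exact (herg B hBm hBinv).imp (congr_sets (eventuallyEq_set.1 hBU)).1
    (congr_sets (eventuallyEq_set.1 hBU.compl)).1

end InvariantSets

theorem stmt15_general {Ω : Type*} [MeasurableSpace Ω]
    (𝒮 : Set (Set Ω → ℝ)) (h𝒮 : 𝒮.Nonempty) (hP : ∀ P ∈ 𝒮, IsFinAddProb P)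
    (V : Set Ω → ℝ) (hV : UpperProbOf 𝒮 V) (hVb : ContBelow V)
    (θ : Ω → Ω) (hθ : Measurable θ) (hpres : PreservesCap V θ) :
    ErgodicCap V θ ↔
      ∀ ξ : Ω → ℝ, Measurable ξ → V {ω | ξ (θ ω) ≠ ξ ω} = 0 →
        ∃ c : ℝ, V {ω | ξ ω ≠ c} = 0 := by
  have hcap := hV.isCapacity h𝒮 hP
  have hsub := hV.isSubadditive h𝒮 hP
  rw [hV.ergodicCap_iff h𝒮 hP hVb]
  constructor
  · intro herg ξ hξ hinv
    have hinv' : ξ ∘ θ =ᶠ[quasiSure V] ξ := (eventually_quasiSure_iff hcap hsub hVb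
      (measurableSet_eq_fun (hξ.comp hθ) hξ).compl).2 hinv
    obtain ⟨c, hc⟩ := exists_eventuallyEq_const_of_comp_eventuallyEq hθ
      (hpres.tendsto_quasiSure hθ) herg hξ hinv'
    exact ⟨c, (eventually_quasiSure_iff hcap hsub hVb (hξ (measurableSet_singleton c)).compl).1 hc⟩
  · intro hconst B hB hinv
    have hξ : Measurable (B.indicator (1 : Ω → ℝ)) := measurable_one.indicator hB
    have hξθ : {ω | B.indicator (1 : Ω → ℝ) (θ ω) ≠ B.indicator 1 ω} = ∅ :=
      eq_empty_of_forall_notMem fun ω hω =>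
        hω (by rw [← indicator_comp_right, hinv, Pi.one_comp])
    obtain ⟨c, hc⟩ := hconst _ hξ (hξθ ▸ hcap.1)
    exact mem_or_compl_mem_of_indicator_eventuallyEq_const <|
      (eventually_quasiSure_iff hcap hsub hVb (hξ (measurableSet_singleton c)).compl).2 hc

theorem stmt15 {Ω : Type*} [MeasurableSpace Ω]
    (𝒮 : Set (Set Ω → ℝ)) (h𝒮 : 𝒮.Nonempty) (hP : ∀ P ∈ 𝒮, IsFinAddProb P)
    (V : Set Ω → ℝ) (hV : UpperProbOf 𝒮 V) (hVb : ContBelow V) (hVa : ContAbove V)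
    (θ : Ω → Ω) (hθ : Measurable θ) (hpres : PreservesCap V θ) :
    ErgodicCap V θ ↔
      ∀ ξ : Ω → ℝ, Measurable ξ → V {ω | ξ (θ ω) ≠ ξ ω} = 0 →
        ∃ c : ℝ, V {ω | ξ ω ≠ c} = 0 :=
  stmt15_general 𝒮 h𝒮 hP V hV hVb θ hθ hpres
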